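/- arXiv:2509.08581 — 2 statements merged into one kernel-verified Lean document; each statement's English description precedes it below -/
import Mathlib

section
/- Let a > 0, b > 0 and c be constants, and let h : I → ℝ be differentiable and satisfy (h')² = (a − h² − b(1 + (h−c)²))(a − h²) with a − h(x)² > 0 on I. Define φ(x,y) = (1/√a)(√(a−h(x)²) cos(√a y), √(a−h(x)²) sin(√a y), h(x)). Then φ maps into the unit sphere S², and ‖∂_y φ‖² = a − h², ‖∂_x φ‖² = a − h² − b(1 + (h−c)²), and ⟨∂_x φ, ∂_y φ⟩ = 0. -/
/-- Euclidean dot product on ℝ³ (modeled as `ℝ × ℝ × ℝ`). -/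
def dot3 (p q : ℝ × ℝ × ℝ) : ℝ := p.1 * q.1 + p.2.1 * q.2.1 + p.2.2 * q.2.2

/-- For `a, b > 0` and `h` solving `(h')² = (a − h² − b(1+(h−c)²))(a − h²)` with
`a − h² > 0` on `I`, the map
`φ(x,y) = (1/√a)(√(a−h²)cos(√a y), √(a−h²)sin(√a y), h)` takes values in the unit sphere
and satisfies `‖∂_yφ‖² = a − h²`, `‖∂_xφ‖² = a − h² − b(1+(h−c)²)`, `⟨∂_xφ, ∂_yφ⟩ = 0`. -/
theorem stmt11 (a b c : ℝ) (ha : 0 < a) (hb : 0 < b) (I : Set ℝ)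
    (h h' : ℝ → ℝ)
    (hdiff : ∀ x ∈ I, HasDerivAt h (h' x) x)
    (hode : ∀ x ∈ I, (h' x)^2 = (a - h x^2 - b * (1 + (h x - c)^2)) * (a - h x^2))
    (hpos : ∀ x ∈ I, a - h x^2 > 0) :
    let φ : ℝ → ℝ → ℝ × ℝ × ℝ := fun x y =>
      (Real.sqrt (a - h x^2) * Real.cos (Real.sqrt a * y) / Real.sqrt a,
       Real.sqrt (a - h x^2) * Real.sin (Real.sqrt a * y) / Real.sqrt a,
       h x / Real.sqrt a)
    ∀ x ∈ I, ∀ y : ℝ,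
      dot3 (φ x y) (φ x y) = 1 ∧
      dot3 (deriv (fun y' => φ x y') y) (deriv (fun y' => φ x y') y) = a - h x^2 ∧
      dot3 (deriv (fun x' => φ x' y) x) (deriv (fun x' => φ x' y) x)
        = a - h x^2 - b * (1 + (h x - c)^2) ∧
      dot3 (deriv (fun x' => φ x' y) x) (deriv (fun y' => φ x y') y) = 0 := by
  intro φ x hx y
  have hax : a - h x ^ 2 > 0 := hpos x hx
  have hdx : HasDerivAt h (h' x) x := hdiff x hx
  have hodex := hode x hx
  set sa := Real.sqrt a with hsa
  set sh := Real.sqrt (a - h x ^ 2) with hsh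
  have hsa2 : sa ^ 2 = a := Real.sq_sqrt ha.le
  have hsapos : 0 < sa := Real.sqrt_pos.mpr ha
  have hsh2 : sh ^ 2 = a - h x ^ 2 := Real.sq_sqrt hax.le
  have hshpos : 0 < sh := Real.sqrt_pos.mpr hax
  -- derivative of inner function a - h^2
  have hinner : HasDerivAt (fun x' => a - h x' ^ 2)
      (0 - ((2:ℕ) * h x ^ 1 * h' x)) x := (hasDerivAt_const x a).sub (hdx.pow 2)
  have hsqrt : HasDerivAt (fun x' => Real.sqrt (a - h x' ^ 2))
      ((0 - ((2:ℕ) * h x ^ 1 * h' x)) / (2 * sh)) x := hinner.sqrt hax.ne'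
  set D : ℝ := (0 - ((2:ℕ) * h x ^ 1 * h' x)) / (2 * sh) with hD
  have hDval : D * (2 * sh) = -(2 * h x * h' x) := by
    rw [hD]; field_simp; push_cast; ring
  -- y-derivatives
  have hy1 : HasDerivAt (fun y' => sh * Real.cos (sa * y') / sa)
      (sh * (-Real.sin (sa * y) * sa) / sa) y := by
    have : HasDerivAt (fun y' => sa * y') sa y := by
      simpa using (hasDerivAt_id y).const_mul sa
    exact (((Real.hasDerivAt_cos (sa * y)).comp y this).const_mul sh).div_const sa
  have hy2 : HasDerivAt (fun y' => sh * Real.sin (sa * y') / sa)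
      (sh * (Real.cos (sa * y) * sa) / sa) y := by
    have : HasDerivAt (fun y' => sa * y') sa y := by
      simpa using (hasDerivAt_id y).const_mul sa
    exact (((Real.hasDerivAt_sin (sa * y)).comp y this).const_mul sh).div_const sa
  have hy3 : HasDerivAt (fun _ : ℝ => h x / sa) 0 y := hasDerivAt_const y _
  have hyD : HasDerivAt (fun y' => φ x y')
      (sh * (-Real.sin (sa * y) * sa) / sa, sh * (Real.cos (sa * y) * sa) / sa, 0) y :=
    hy1.prodMk (hy2.prodMk hy3)
  -- x-derivatives
  have hx1 : HasDerivAt (fun x' => Real.sqrt (a - h x' ^ 2) * Real.cos (sa * y) / sa)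
      (D * Real.cos (sa * y) / sa) x := (hsqrt.mul_const _).div_const sa
  have hx2 : HasDerivAt (fun x' => Real.sqrt (a - h x' ^ 2) * Real.sin (sa * y) / sa)
      (D * Real.sin (sa * y) / sa) x := (hsqrt.mul_const _).div_const sa
  have hx3 : HasDerivAt (fun x' => h x' / sa) (h' x / sa) x := hdx.div_const sa
  have hxD : HasDerivAt (fun x' => φ x' y)
      (D * Real.cos (sa * y) / sa, D * Real.sin (sa * y) / sa, h' x / sa) x :=
    hx1.prodMk (hx2.prodMk hx3)
  rw [hyD.deriv, hxD.deriv]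
  have htrig : Real.sin (sa * y) ^ 2 + Real.cos (sa * y) ^ 2 = 1 :=
    Real.sin_sq_add_cos_sq _
  have hD2 : D ^ 2 * (a - h x ^ 2) = h x ^ 2 * h' x ^ 2 := by
    have h4 : (2 * sh) ^ 2 = 4 * (a - h x ^ 2) := by rw [mul_pow, hsh2]; ring
    have := congrArg (· ^ 2) hDval
    simp only [mul_pow] at this
    nlinarith [this, h4]
  have hD2' : D ^ 2 = h x ^ 2 * (a - h x ^ 2 - b * (1 + (h x - c) ^ 2)) :=
    mul_right_cancel₀ hax.ne' (by rw [hD2, hodex]; ring)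
  have hdiv : ∀ u v : ℝ, u / sa * (v / sa) = u * v / a := by
    intro u v
    rw [div_mul_div_comm, ← hsa2]; ring
  have e1 : sh * (-Real.sin (sa * y) * sa) / sa = -(sh * Real.sin (sa * y)) := by
    field_simp
  have e2 : sh * (Real.cos (sa * y) * sa) / sa = sh * Real.cos (sa * y) := by
    field_simp
  refine ⟨?_, ?_, ?_, ?_⟩
  · simp only [φ, dot3]
    rw [hdiv, hdiv, hdiv, ← add_div, ← add_div, div_eq_one_iff_eq ha.ne']
    linear_combination sh ^ 2 * htrig + hsh2
  · simp only [dot3, e1, e2]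
    linear_combination sh ^ 2 * htrig + hsh2
  · simp only [dot3]
    rw [hdiv, hdiv, hdiv, ← add_div, ← add_div, div_eq_iff ha.ne']
    linear_combination D ^ 2 * htrig + hD2' + hodex
  · simp only [dot3, e1, e2]
    ring
end

section
/- Let Σ be a 2-dimensional subspace of a 4-dimensional inner product space V and F a symmetric orthogonal involution on V with 2-dimensional ±1 eigenspaces. Suppose there exist orthonormal x, y ∈ Σ, a real number a and vectors η₁, η₂ ∈ Σ^⊥ with Fx = a x + η₁ and Fy = a y + η₂, where η₁, η₂ are linearly dependent. Then η₁ = η₂ = 0 and a = ±1; consequently Σ is an eigenspace of F. -/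
set_option maxHeartbeats 1000000 in
/-- Let `V` be a 4-dimensional real inner ℝ product space, `F` a symmetric orthogonal
involution, `S` a 2-plane spanned by orthonormal vectors `x, y`, and suppose
`Fx = a·x + η₁`, `Fy = a·y + η₂` with `η₁, η₂ ∈ S^⊥` linearly dependent. Then
`η₁ = η₂ = 0`, `a = ±1`, and `S` is an eigenspace of `F`. -/
theorem stmt17 {V : Type*} [NormedAddCommGroup V] [InnerProductSpace ℝ V]
    [FiniteDimensional ℝ V] (hV : Module.finrank ℝ V = 4)
    (F : V →ₗ[ℝ] V)
    (hsym : ∀ v w, (inner ℝ (F v) w : ℝ) = inner ℝ v (F w))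
    (horth : ∀ v w, (inner ℝ (F v) (F w) : ℝ) = inner ℝ v w)
    (hinv : ∀ v, F (F v) = v)
    (S : Submodule ℝ V)
    (x y : V) (hx : x ∈ S) (hy : y ∈ S)
    (hxn : ‖x‖ = 1) (hyn : ‖y‖ = 1) (hxy : (inner ℝ x y : ℝ) = 0)
    (hspan : Submodule.span ℝ {x, y} = S)
    (a : ℝ) (η₁ η₂ : V) (hη₁ : η₁ ∈ Sᗮ) (hη₂ : η₂ ∈ Sᗮ)
    (hFx : F x = a • x + η₁) (hFy : F y = a • y + η₂)
    (hdep : ∃ c : ℝ, η₂ = c • η₁ ∨ η₁ = c • η₂) :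
    η₁ = 0 ∧ η₂ = 0 ∧ (a = 1 ∨ a = -1) ∧ ∀ v ∈ S, F v = a • v := by
  have hxx : (inner ℝ x x : ℝ) = 1 := by
    rw [real_inner_self_eq_norm_sq, hxn]; norm_num
  have hyy : (inner ℝ y y : ℝ) = 1 := by
    rw [real_inner_self_eq_norm_sq, hyn]; norm_num
  have hxη₁ : (inner ℝ x η₁ : ℝ) = 0 := (Submodule.mem_orthogonal S η₁).mp hη₁ x hx
  have hxη₂ : (inner ℝ x η₂ : ℝ) = 0 := (Submodule.mem_orthogonal S η₂).mp hη₂ x hx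
  have hyη₁ : (inner ℝ y η₁ : ℝ) = 0 := (Submodule.mem_orthogonal S η₁).mp hη₁ y hy
  have hyη₂ : (inner ℝ y η₂ : ℝ) = 0 := (Submodule.mem_orthogonal S η₂).mp hη₂ y hy
  have hη₁x : (inner ℝ η₁ x : ℝ) = 0 := by rw [real_inner_comm]; exact hxη₁
  have hη₂x : (inner ℝ η₂ x : ℝ) = 0 := by rw [real_inner_comm]; exact hxη₂
  have hη₁y : (inner ℝ η₁ y : ℝ) = 0 := by rw [real_inner_comm]; exact hyη₁
  have hη₂y : (inner ℝ η₂ y : ℝ) = 0 := by rw [real_inner_comm]; exact hyη₂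
  have hyx : (inner ℝ y x : ℝ) = 0 := by rw [real_inner_comm]; exact hxy
  have h1 : a ^ 2 + (inner ℝ η₁ η₁ : ℝ) = 1 := by
    have := horth x x
    rw [hFx] at this
    simp only [inner_add_add_self, inner_smul_left, inner_smul_right, hxx, hxη₁, hη₁x,
      RCLike.star_def, conj_trivial] at this
    nlinarith [this]
  have h2 : a ^ 2 + (inner ℝ η₂ η₂ : ℝ) = 1 := by
    have := horth y y
    rw [hFy] at this
    simp only [inner_add_add_self, inner_smul_left, inner_smul_right, hyy, hyη₂, hη₂y,
      RCLike.star_def, conj_trivial] at this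
    nlinarith [this]
  have h3 : (inner ℝ η₁ η₂ : ℝ) = 0 := by
    have := horth x y
    rw [hFx, hFy] at this
    simp only [inner_add_left, inner_add_right, inner_smul_left, inner_smul_right,
      hxy, hxη₂, hη₁y, RCLike.star_def, conj_trivial] at this
    linarith [this]
  have hz1 : η₁ = 0 ∧ η₂ = 0 := by
    obtain ⟨c, hc | hc⟩ := hdep
    · subst hc
      rw [inner_smul_right] at h3
      have h11 : (inner ℝ η₁ η₁ : ℝ) = 0 := by
        rcases eq_or_ne c 0 with h | h
        · simp only [inner_smul_left, inner_smul_right, h, RCLike.star_def,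
            conj_trivial] at h2
          nlinarith
        · have := mul_eq_zero.mp h3
          tauto
      constructor
      · exact inner_self_eq_zero.mp h11
      · rw [inner_self_eq_zero.mp h11, smul_zero]
    · subst hc
      rw [inner_smul_left] at h3
      simp only [RCLike.star_def, conj_trivial] at h3
      have h22 : (inner ℝ η₂ η₂ : ℝ) = 0 := by
        rcases eq_or_ne c 0 with h | h
        · simp only [inner_smul_left, inner_smul_right, h, RCLike.star_def,
            conj_trivial] at h1
          nlinarith
        · have := mul_eq_zero.mp h3
          tauto
      constructor
      · rw [inner_self_eq_zero.mp h22, smul_zero]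
      · exact inner_self_eq_zero.mp h22
  obtain ⟨hz₁, hz₂⟩ := hz1
  subst hz₁; subst hz₂
  rw [inner_zero_left] at h1
  have ha : a = 1 ∨ a = -1 := mul_self_eq_one_iff.mp (by nlinarith)
  refine ⟨rfl, rfl, ha, ?_⟩
  intro v hv
  rw [← hspan] at hv
  obtain ⟨s, t, rfl⟩ := Submodule.mem_span_pair.mp hv
  simp only [map_add, map_smul, hFx, hFy, add_zero, smul_add]
  module
end
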